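/- Let φ : ℝ³ → ℝ be a smooth nowhere-zero function of (x, y, t), and set u = -2 φ_x/φ and h = -2 φ_x φ_y/φ² + 2 φ_xy/φ - 1. Then, with ψ := φ_t - φ_xx, the following identity holds pointwise: u_yt + h_xx + (1/2)(u²)_xy = -[(4/φ³) φ_x φ_y ψ - (2/φ²)(φ_x ψ_y + φ_y ψ_x + φ_xy ψ) + (2/φ) ψ_xy]. -/

import Mathlib

noncomputable def pdx (f : ℝ → ℝ → ℝ → ℝ) : ℝ → ℝ → ℝ → ℝ :=
  fun x y t => deriv (fun x' => f x' y t) x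

noncomputable def pdy (f : ℝ → ℝ → ℝ → ℝ) : ℝ → ℝ → ℝ → ℝ :=
  fun x y t => deriv (fun y' => f x y' t) y

noncomputable def pdt (f : ℝ → ℝ → ℝ → ℝ) : ℝ → ℝ → ℝ → ℝ :=
  fun x y t => deriv (fun t' => f x y t') t

namespace DLWAux

def unc (f : ℝ → ℝ → ℝ → ℝ) : ℝ × ℝ × ℝ → ℝ := fun p => f p.1 p.2.1 p.2.2

def Sm (f : ℝ → ℝ → ℝ → ℝ) : Prop := ContDiff ℝ (⊤ : ℕ∞) (unc f)

variable {f g : ℝ → ℝ → ℝ → ℝ}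

theorem Sm.hasDerivAt_x (hf : Sm f) (x y t : ℝ) :
    HasDerivAt (fun x' => f x' y t) (fderiv ℝ (unc f) (x, y, t) (1, 0, 0)) x := by
  have h1 : HasFDerivAt (unc f) (fderiv ℝ (unc f) (x, y, t)) (x, y, t) :=
    (hf.differentiable (by simp) (x, y, t)).hasFDerivAt
  have h2 : HasDerivAt (fun x' : ℝ => ((x', (y, t)) : ℝ × ℝ × ℝ)) (1, (0, 0)) x :=
    (hasDerivAt_id x).prodMk (hasDerivAt_const x (y, t))
  exact h1.comp_hasDerivAt x h2

theorem Sm.hasDerivAt_y (hf : Sm f) (x y t : ℝ) :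
    HasDerivAt (fun y' => f x y' t) (fderiv ℝ (unc f) (x, y, t) (0, 1, 0)) y := by
  have h1 : HasFDerivAt (unc f) (fderiv ℝ (unc f) (x, y, t)) (x, y, t) :=
    (hf.differentiable (by simp) (x, y, t)).hasFDerivAt
  have h2 : HasDerivAt (fun y' : ℝ => ((x, (y', t)) : ℝ × ℝ × ℝ)) (0, (1, 0)) y :=
    (hasDerivAt_const y x).prodMk ((hasDerivAt_id y).prodMk (hasDerivAt_const y t))
  exact h1.comp_hasDerivAt y h2

theorem Sm.hasDerivAt_t (hf : Sm f) (x y t : ℝ) :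
    HasDerivAt (fun t' => f x y t') (fderiv ℝ (unc f) (x, y, t) (0, 0, 1)) t := by
  have h1 : HasFDerivAt (unc f) (fderiv ℝ (unc f) (x, y, t)) (x, y, t) :=
    (hf.differentiable (by simp) (x, y, t)).hasFDerivAt
  have h2 : HasDerivAt (fun t' : ℝ => ((x, (y, t')) : ℝ × ℝ × ℝ)) (0, (0, 1)) t :=
    (hasDerivAt_const t x).prodMk ((hasDerivAt_const t y).prodMk (hasDerivAt_id t))
  exact h1.comp_hasDerivAt t h2

theorem pdx_eq (hf : Sm f) (x y t : ℝ) :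
    pdx f x y t = fderiv ℝ (unc f) (x, y, t) (1, 0, 0) := (hf.hasDerivAt_x x y t).deriv

theorem pdy_eq (hf : Sm f) (x y t : ℝ) :
    pdy f x y t = fderiv ℝ (unc f) (x, y, t) (0, 1, 0) := (hf.hasDerivAt_y x y t).deriv

theorem pdt_eq (hf : Sm f) (x y t : ℝ) :
    pdt f x y t = fderiv ℝ (unc f) (x, y, t) (0, 0, 1) := (hf.hasDerivAt_t x y t).deriv

theorem unc_pdx (hf : Sm f) : unc (pdx f) = fun p => fderiv ℝ (unc f) p (1, 0, 0) := by
  funext p; obtain ⟨x, y, t⟩ := p; exact pdx_eq hf x y t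

theorem unc_pdy (hf : Sm f) : unc (pdy f) = fun p => fderiv ℝ (unc f) p (0, 1, 0) := by
  funext p; obtain ⟨x, y, t⟩ := p; exact pdy_eq hf x y t

theorem unc_pdt (hf : Sm f) : unc (pdt f) = fun p => fderiv ℝ (unc f) p (0, 0, 1) := by
  funext p; obtain ⟨x, y, t⟩ := p; exact pdt_eq hf x y t

theorem Sm.pdx' (hf : Sm f) : Sm (pdx f) := by
  rw [Sm, unc_pdx hf]
  exact (hf.fderiv_right (by simp)).clm_apply contDiff_const

theorem Sm.pdy' (hf : Sm f) : Sm (pdy f) := by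
  rw [Sm, unc_pdy hf]
  exact (hf.fderiv_right (by simp)).clm_apply contDiff_const

theorem Sm.pdt' (hf : Sm f) : Sm (pdt f) := by
  rw [Sm, unc_pdt hf]
  exact (hf.fderiv_right (by simp)).clm_apply contDiff_const

theorem Sm.dx (hf : Sm f) (x y t : ℝ) : DifferentiableAt ℝ (fun x' => f x' y t) x :=
  (hf.hasDerivAt_x x y t).differentiableAt

theorem Sm.dy (hf : Sm f) (x y t : ℝ) : DifferentiableAt ℝ (fun y' => f x y' t) y :=
  (hf.hasDerivAt_y x y t).differentiableAt

theorem Sm.dt (hf : Sm f) (x y t : ℝ) : DifferentiableAt ℝ (fun t' => f x y t') t :=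
  (hf.hasDerivAt_t x y t).differentiableAt

/-! Clairaut -/

theorem D2_eq {F : ℝ × ℝ × ℝ → ℝ} (hF : ContDiff ℝ (⊤ : ℕ∞) F) (p v w : ℝ × ℝ × ℝ) :
    fderiv ℝ (fun q => fderiv ℝ F q v) p w = fderiv ℝ (fderiv ℝ F) p w v := by
  have hd : DifferentiableAt ℝ (fderiv ℝ F) p :=
    ((hF.fderiv_right (m := (⊤ : ℕ∞)) (by simp)).differentiable (by simp)) p
  have h2 := ((ContinuousLinearMap.apply ℝ ℝ v).hasFDerivAt.comp p hd.hasFDerivAt).fderiv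
  have h3 : (fun q => fderiv ℝ F q v) = (ContinuousLinearMap.apply ℝ ℝ v) ∘ (fderiv ℝ F) := rfl
  rw [h3, h2]; rfl

theorem clairaut {F : ℝ × ℝ × ℝ → ℝ} (hF : ContDiff ℝ (⊤ : ℕ∞) F) (p v w : ℝ × ℝ × ℝ) :
    fderiv ℝ (fun q => fderiv ℝ F q v) p w = fderiv ℝ (fun q => fderiv ℝ F q w) p v := by
  rw [D2_eq hF, D2_eq hF]
  have hd : DifferentiableAt ℝ (fderiv ℝ F) p :=
    ((hF.fderiv_right (m := (⊤ : ℕ∞)) (by simp)).differentiable (by simp)) p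
  exact second_derivative_symmetric
    (fun q => ((hF.differentiable (by simp)) q).hasFDerivAt) hd.hasFDerivAt w v

theorem pdx_pdy_comm (hf : Sm f) : pdx (pdy f) = pdy (pdx f) := by
  funext x y t
  rw [pdx_eq hf.pdy' x y t, pdy_eq hf.pdx' x y t, unc_pdy hf, unc_pdx hf]
  exact clairaut hf _ _ _

theorem pdx_pdt_comm (hf : Sm f) : pdx (pdt f) = pdt (pdx f) := by
  funext x y t
  rw [pdx_eq hf.pdt' x y t, pdt_eq hf.pdx' x y t, unc_pdt hf, unc_pdx hf]
  exact clairaut hf _ _ _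

theorem pdy_pdt_comm (hf : Sm f) : pdy (pdt f) = pdt (pdy f) := by
  funext x y t
  rw [pdy_eq hf.pdt' x y t, pdt_eq hf.pdy' x y t, unc_pdt hf, unc_pdy hf]
  exact clairaut hf _ _ _

/-! Smoothness closure -/

theorem Sm.add' (hf : Sm f) (hg : Sm g) : Sm (fun a b c => f a b c + g a b c) :=
  ContDiff.add hf hg

theorem Sm.sub' (hf : Sm f) (hg : Sm g) : Sm (fun a b c => f a b c - g a b c) :=
  ContDiff.sub hf hg

theorem Sm.neg' (hf : Sm f) : Sm (fun a b c => -(f a b c)) := ContDiff.neg hf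

theorem Sm.mul' (hf : Sm f) (hg : Sm g) : Sm (fun a b c => f a b c * g a b c) :=
  ContDiff.mul hf hg

theorem Sm.cmul (k : ℝ) (hf : Sm f) : Sm (fun a b c => k * f a b c) :=
  ContDiff.mul contDiff_const hf

theorem Sm.div' (hf : Sm f) (hg : Sm g) (h0 : ∀ x y t, g x y t ≠ 0) :
    Sm (fun a b c => f a b c / g a b c) :=
  ContDiff.div hf hg (fun p => h0 p.1 p.2.1 p.2.2)

theorem Sm.sq' (hf : Sm f) : Sm (fun a b c => f a b c ^ 2) := ContDiff.pow hf 2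

theorem Sm.subc (k : ℝ) (hf : Sm f) : Sm (fun a b c => f a b c - k) :=
  ContDiff.sub hf contDiff_const

/-! pd combinators (x) -/

theorem pdx_add (hf : Sm f) (hg : Sm g) :
    pdx (fun a b c => f a b c + g a b c) = fun x y t => pdx f x y t + pdx g x y t := by
  funext x y t; exact deriv_add (hf.dx x y t) (hg.dx x y t)

theorem pdx_sub (hf : Sm f) (hg : Sm g) :
    pdx (fun a b c => f a b c - g a b c) = fun x y t => pdx f x y t - pdx g x y t := by
  funext x y t; exact deriv_sub (hf.dx x y t) (hg.dx x y t)

theorem pdx_neg :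
    pdx (fun a b c => -(f a b c)) = fun x y t => -(pdx f x y t) := by
  funext x y t; exact deriv.neg

theorem pdx_cmul (k : ℝ) (hf : Sm f) :
    pdx (fun a b c => k * f a b c) = fun x y t => k * pdx f x y t := by
  funext x y t; exact deriv_const_mul k (hf.dx x y t)

theorem pdx_mul (hf : Sm f) (hg : Sm g) :
    pdx (fun a b c => f a b c * g a b c)
      = fun x y t => pdx f x y t * g x y t + f x y t * pdx g x y t := by
  funext x y t; exact deriv_mul (hf.dx x y t) (hg.dx x y t)

theorem pdx_div (hf : Sm f) (hg : Sm g) (h0 : ∀ x y t, g x y t ≠ 0) :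
    pdx (fun a b c => f a b c / g a b c)
      = fun x y t => (pdx f x y t * g x y t - f x y t * pdx g x y t) / (g x y t) ^ 2 := by
  funext x y t; exact deriv_div (hf.dx x y t) (hg.dx x y t) (h0 x y t)

theorem pdx_sq (hf : Sm f) :
    pdx (fun a b c => f a b c ^ 2) = fun x y t => 2 * f x y t * pdx f x y t := by
  funext x y t
  have h : (fun x' => f x' y t ^ 2) = fun x' => f x' y t * f x' y t := by
    funext x'; ring
  show deriv (fun x' => f x' y t ^ 2) x = _
  rw [h, deriv_fun_mul (hf.dx x y t) (hf.dx x y t)]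
  show pdx f x y t * f x y t + f x y t * pdx f x y t = _
  ring

theorem pdx_subc (k : ℝ) :
    pdx (fun a b c => f a b c - k) = pdx f := by
  funext x y t; exact deriv_sub_const k

/-! pd combinators (y) -/

theorem pdy_add (hf : Sm f) (hg : Sm g) :
    pdy (fun a b c => f a b c + g a b c) = fun x y t => pdy f x y t + pdy g x y t := by
  funext x y t; exact deriv_add (hf.dy x y t) (hg.dy x y t)

theorem pdy_sub (hf : Sm f) (hg : Sm g) :
    pdy (fun a b c => f a b c - g a b c) = fun x y t => pdy f x y t - pdy g x y t := by
  funext x y t; exact deriv_sub (hf.dy x y t) (hg.dy x y t)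

theorem pdy_neg :
    pdy (fun a b c => -(f a b c)) = fun x y t => -(pdy f x y t) := by
  funext x y t; exact deriv.neg

theorem pdy_cmul (k : ℝ) (hf : Sm f) :
    pdy (fun a b c => k * f a b c) = fun x y t => k * pdy f x y t := by
  funext x y t; exact deriv_const_mul k (hf.dy x y t)

theorem pdy_mul (hf : Sm f) (hg : Sm g) :
    pdy (fun a b c => f a b c * g a b c)
      = fun x y t => pdy f x y t * g x y t + f x y t * pdy g x y t := by
  funext x y t; exact deriv_mul (hf.dy x y t) (hg.dy x y t)

theorem pdy_div (hf : Sm f) (hg : Sm g) (h0 : ∀ x y t, g x y t ≠ 0) :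
    pdy (fun a b c => f a b c / g a b c)
      = fun x y t => (pdy f x y t * g x y t - f x y t * pdy g x y t) / (g x y t) ^ 2 := by
  funext x y t; exact deriv_div (hf.dy x y t) (hg.dy x y t) (h0 x y t)

theorem pdy_sq (hf : Sm f) :
    pdy (fun a b c => f a b c ^ 2) = fun x y t => 2 * f x y t * pdy f x y t := by
  funext x y t
  have h : (fun y' => f x y' t ^ 2) = fun y' => f x y' t * f x y' t := by
    funext y'; ring
  show deriv (fun y' => f x y' t ^ 2) y = _
  rw [h, deriv_fun_mul (hf.dy x y t) (hf.dy x y t)]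
  show pdy f x y t * f x y t + f x y t * pdy f x y t = _
  ring

/-! pd combinators (t) -/

theorem pdt_cmul (k : ℝ) (hf : Sm f) :
    pdt (fun a b c => k * f a b c) = fun x y t => k * pdt f x y t := by
  funext x y t; exact deriv_const_mul k (hf.dt x y t)

theorem pdt_div (hf : Sm f) (hg : Sm g) (h0 : ∀ x y t, g x y t ≠ 0) :
    pdt (fun a b c => f a b c / g a b c)
      = fun x y t => (pdt f x y t * g x y t - f x y t * pdt g x y t) / (g x y t) ^ 2 := by
  funext x y t; exact deriv_div (hf.dt x y t) (hg.dt x y t) (h0 x y t)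

end DLWAux

open DLWAux

/-- With `u = -2 φ_x / φ`, `h = -2 φ_x φ_y / φ² + 2 φ_xy / φ - 1` and `ψ = φ_t - φ_xx`,
one has `u_yt + h_xx + (1/2)(u²)_xy
  = -[(4/φ³) φ_x φ_y ψ - (2/φ²)(φ_x ψ_y + φ_y ψ_x + φ_xy ψ) + (2/φ) ψ_xy]`. -/
theorem dlw_identity1_minus (φ u h ψ : ℝ → ℝ → ℝ → ℝ)
    (hφ : ContDiff ℝ (⊤ : ℕ∞) (fun p : ℝ × ℝ × ℝ => φ p.1 p.2.1 p.2.2))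
    (hne : ∀ x y t, φ x y t ≠ 0)
    (hu : u = fun x y t => -2 * pdx φ x y t / φ x y t)
    (hh : h = fun x y t =>
      -2 * pdx φ x y t * pdy φ x y t / (φ x y t) ^ 2
        + 2 * pdy (pdx φ) x y t / φ x y t - 1)
    (hψ : ψ = fun x y t => pdt φ x y t - pdx (pdx φ) x y t) :
    ∀ x y t, pdt (pdy u) x y t + pdx (pdx h) x y t
        + (1 / 2) * pdy (pdx (fun a b c => (u a b c) ^ 2)) x y t
      = -(4 / (φ x y t) ^ 3 * (pdx φ x y t * pdy φ x y t * ψ x y t)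
          - 2 / (φ x y t) ^ 2 * (pdx φ x y t * pdy ψ x y t
              + pdy φ x y t * pdx ψ x y t + pdy (pdx φ) x y t * ψ x y t)
          + 2 / φ x y t * pdy (pdx ψ) x y t) := by
  subst hu hh hψ
  intro x y t
  beta_reduce
  have s0 : Sm φ := hφ
  have sx := s0.pdx'
  have sy := s0.pdy'
  have st := s0.pdt'
  have sxx := sx.pdx'
  have sxt := sx.pdt'
  have sxxx := sxx.pdx'
  have hP2 : ∀ x y t, φ x y t ^ 2 ≠ 0 := fun x y t => pow_ne_zero 2 (hne x y t)
  have sU : Sm (fun a b c => -2 * pdx φ a b c / φ a b c) :=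
    Sm.div' (Sm.cmul (-2) sx) s0 hne
  have sV : Sm (fun a b c => 2 * pdx φ a b c / φ a b c) :=
    Sm.div' (Sm.cmul 2 sx) s0 hne
  have sPsi : Sm (fun a b c => pdt φ a b c - pdx (pdx φ) a b c) :=
    Sm.sub' st sxx
  -- step A : rewrite h-lambda
  have hhv : (fun x y t => -2 * pdx φ x y t * pdy φ x y t / (φ x y t) ^ 2
        + 2 * pdy (pdx φ) x y t / φ x y t - 1)
      = fun x y t => pdy (fun a b c => 2 * pdx φ a b c / φ a b c) x y t - 1 := by
    rw [pdy_div (Sm.cmul 2 sx) s0 hne, pdy_cmul 2 sx]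
    funext x y t
    have h0 := hne x y t
    beta_reduce
    field_simp
    ring
  rw [hhv]
  rw [pdx_subc 1, pdx_pdy_comm sV, pdx_pdy_comm sV.pdx']
  rw [← pdy_pdt_comm sU]
  -- key first-order identity
  have hkey : (pdt fun a b c => -2 * pdx φ a b c / φ a b c)
      = fun a b c => -(pdx (pdx fun a b c => 2 * pdx φ a b c / φ a b c) a b c)
          - 1 / 2 * pdx (fun a b c => (-2 * pdx φ a b c / φ a b c) ^ 2) a b c
          - pdx (fun a b c => 2 * (pdt φ a b c - pdx (pdx φ) a b c) / φ a b c) a b c := by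
    rw [pdt_div (Sm.cmul (-2) sx) s0 hne, pdt_cmul (-2) sx]
    rw [pdx_div (Sm.cmul 2 sx) s0 hne, pdx_cmul 2 sx]
    beta_reduce
    rw [pdx_div (Sm.sub' (Sm.mul' (Sm.cmul 2 sxx) s0) (Sm.mul' (Sm.cmul 2 sx) sx)) s0.sq' hP2,
        pdx_sub (Sm.mul' (Sm.cmul 2 sxx) s0) (Sm.mul' (Sm.cmul 2 sx) sx),
        pdx_mul (Sm.cmul 2 sxx) s0, pdx_mul (Sm.cmul 2 sx) sx,
        pdx_cmul 2 sxx, pdx_cmul 2 sx, pdx_sq s0]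
    rw [pdx_sq sU, pdx_div (Sm.cmul (-2) sx) s0 hne, pdx_cmul (-2) sx]
    rw [pdx_div (Sm.cmul 2 sPsi) s0 hne, pdx_cmul 2 sPsi,
        pdx_sub st sxx, pdx_pdt_comm s0]
    funext a b c
    have h0 := hne a b c
    beta_reduce
    field_simp
    ring
  rw [hkey]
  have sA := sV.pdx'.pdx'
  have sB := sU.sq'.pdx'
  have sR : Sm (fun a b c => 2 * (pdt φ a b c - pdx (pdx φ) a b c) / φ a b c) :=
    Sm.div' (Sm.cmul 2 sPsi) s0 hne
  rw [pdy_sub (Sm.sub' (Sm.neg' sA) (Sm.cmul (1/2) sB)) sR.pdx',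
      pdy_sub (Sm.neg' sA) (Sm.cmul (1/2) sB),
      pdy_neg (f := pdx (pdx fun a b c => 2 * pdx φ a b c / φ a b c)),
      pdy_cmul (1/2) sB]
  -- expand pdx of R and of ψ
  rw [pdx_div (Sm.cmul 2 sPsi) s0 hne, pdx_cmul 2 sPsi,
      pdx_sub st sxx, pdx_pdt_comm s0]
  beta_reduce
  rw [pdy_div (Sm.sub' (Sm.mul' (Sm.cmul 2 (Sm.sub' sxt sxxx)) s0)
        (Sm.mul' (Sm.cmul 2 sPsi) sx)) s0.sq' hP2,
      pdy_sub (Sm.mul' (Sm.cmul 2 (Sm.sub' sxt sxxx)) s0) (Sm.mul' (Sm.cmul 2 sPsi) sx),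
      pdy_mul (Sm.cmul 2 (Sm.sub' sxt sxxx)) s0,
      pdy_mul (Sm.cmul 2 sPsi) sx,
      pdy_cmul 2 (Sm.sub' sxt sxxx),
      pdy_cmul 2 sPsi,
      pdy_sub sxt sxxx,
      pdy_sub st sxx,
      pdy_pdt_comm sx, pdy_pdt_comm s0,
      pdy_sq s0]
  beta_reduce
  have h0 := hne x y t
  field_simp
  ring
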